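/- arXiv:2107.13197 — 6 statements merged into one kernel-verified Lean document; each statement's English description precedes it below -/
import Mathlib

section
/- For α ≠ 0 let μ(t) = 2αe^{αt}/(e^{αt}−1) and β(t) = (e^{αt}−1)/(2α). Then for all φ ≥ 0 and t > 0, exp(−αφe^{αt}/(α + ((e^{αt}−1)/2)φ)) = e^{−μ(t)} · exp(μ(t)/(1 + β(t)φ)) = Σ_{ℓ=0}^∞ e^{−μ(t)} (μ(t)^ℓ/ℓ!) (1 + β(t)φ)^{−ℓ}. -/
/-! The exponent of the Feller Laplace transform splits as `-μ + μ / (1 + βφ)`, so the transform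
is `e^{-μ} e^{μ s}` with `s = (1 + βφ)⁻¹`: the probability generating function of a Poisson(μ)
variable evaluated at `s`, which is the Laplace transform `(1 + βφ)⁻¹` of an exponential variable
of mean `β`. Expanding `e^{μ s}` in its power series gives the mixture. -/

open Real

theorem mul_exp_mul_sub_one_pos {a t : ℝ} (ha : a ≠ 0) (ht : 0 < t) :
    0 < a * (exp (a * t) - 1) := by
  rcases ha.lt_or_gt with ha | ha
  · have : exp (a * t) < 1 := exp_lt_one_iff.mpr (mul_neg_of_neg_of_pos ha ht)
    nlinarith
  · have : 1 < exp (a * t) := one_lt_exp_iff.mpr (mul_pos ha ht)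
    nlinarith

theorem feller_exponent_eq {a E φ : ℝ} (ha : a ≠ 0) (hE : E - 1 ≠ 0)
    (hD : 2 * a + (E - 1) * φ ≠ 0) :
    -(a * φ * E) / (a + (E - 1) / 2 * φ)
      = -(2 * a * E / (E - 1)) + 2 * a * E / (E - 1) / (1 + (E - 1) / (2 * a) * φ) := by
  have hden₁ : a + (E - 1) / 2 * φ = (2 * a + (E - 1) * φ) / 2 := by ring
  have hden₂ : 1 + (E - 1) / (2 * a) * φ = (2 * a + (E - 1) * φ) / (2 * a) := by field_simp
  rw [hden₁, hden₂]
  generalize hDdef : 2 * a + (E - 1) * φ = D at *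
  field_simp
  linear_combination (-E) * hDdef

theorem hasSum_poisson_pgf (m s : ℝ) :
    HasSum (fun n : ℕ => exp (-m) * m ^ n / n.factorial * s ^ n) (exp (-m) * exp (m * s)) := by
  have hexp := NormedSpace.expSeries_div_hasSum_exp (m * s)
  rw [← exp_eq_exp_ℝ] at hexp
  exact (hexp.mul_left (exp (-m))).congr_fun fun n => by ring

theorem tsum_poisson_mul_rpow_neg (m : ℝ) {x : ℝ} (hx : 0 ≤ x) :
    ∑' n : ℕ, exp (-m) * m ^ n / n.factorial * x ^ (-(n : ℝ)) = exp (-m) * exp (m / x) := by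
  have hterm : ∀ n : ℕ, x ^ (-(n : ℝ)) = x⁻¹ ^ n := fun n => by
    rw [rpow_neg hx, rpow_natCast, inv_pow]
  simp_rw [hterm, div_eq_mul_inv m x]
  exact (hasSum_poisson_pgf m x⁻¹).tsum_eq

/-- Feller's Poisson-mixture representation of the Laplace transform: for `α ≠ 0`,
`μ(t) = 2αe^{αt}/(e^{αt}−1)`, `β(t) = (e^{αt}−1)/(2α)`, and all `φ ≥ 0`, `t > 0`,
`exp(−αφe^{αt}/(α + ((e^{αt}−1)/2)φ)) = e^{−μ(t)} exp(μ(t)/(1+β(t)φ))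
  = Σ_{ℓ=0}^∞ e^{−μ(t)} (μ(t)^ℓ/ℓ!) (1+β(t)φ)^{−ℓ}`. -/
theorem feller_poisson_mixture (α : ℝ) (hα : α ≠ 0) (μ β : ℝ → ℝ)
    (hμ : ∀ t : ℝ, μ t = 2 * α * Real.exp (α * t) / (Real.exp (α * t) - 1))
    (hβ : ∀ t : ℝ, β t = (Real.exp (α * t) - 1) / (2 * α)) :
    ∀ φ t : ℝ, 0 ≤ φ → 0 < t →
      Real.exp (-(α * φ * Real.exp (α * t)) / (α + (Real.exp (α * t) - 1) / 2 * φ))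
        = Real.exp (-(μ t)) * Real.exp (μ t / (1 + β t * φ))
      ∧ Real.exp (-(α * φ * Real.exp (α * t)) / (α + (Real.exp (α * t) - 1) / 2 * φ))
        = ∑' ℓ : ℕ, Real.exp (-(μ t)) * (μ t) ^ ℓ / (Nat.factorial ℓ) *
            (1 + β t * φ) ^ (-(ℓ : ℝ)) := by
  intro φ t hφ ht
  have hpos := mul_exp_mul_sub_one_pos hα ht
  have hE : exp (α * t) - 1 ≠ 0 := right_ne_zero_of_mul hpos.ne'
  have hD : 2 * α + (exp (α * t) - 1) * φ ≠ 0 := by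
    refine right_ne_zero_of_mul (a := α) (ne_of_gt ?_)
    nlinarith [mul_nonneg hpos.le hφ, mul_self_pos.mpr hα]
  have hβ_pos : 0 < β t := by
    rw [hβ, div_pos_iff, ← mul_pos_iff]
    linarith
  have hsplit : exp (-(α * φ * exp (α * t)) / (α + (exp (α * t) - 1) / 2 * φ))
      = exp (-(μ t)) * exp (μ t / (1 + β t * φ)) := by
    rw [hμ, hβ, ← exp_add, feller_exponent_eq hα hE hD]
  refine ⟨hsplit, hsplit.trans ?_⟩
  rw [tsum_poisson_mul_rpow_neg (μ t) (add_nonneg zero_le_one (mul_nonneg hβ_pos.le hφ))]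
end

section
/- Let α < 0. Define μ(t) = 2αe^{αt}/(e^{αt}−1), β(t) = (e^{αt}−1)/(2α), and ζ(φ,t) = Σ_{ℓ=1}^∞ (e^{−μ(t)}/(1−e^{−μ(t)})) (μ(t)^ℓ/ℓ!) (1+β(t)φ)^{−ℓ}. Then for every φ ≥ 0, lim_{t→∞} ζ(φ,t) = 2|α|/(φ + 2|α|). -/
open Real Filter Topology

/-!
The summand is a zero-truncated Poisson(`μ`) weight times `(1 + βφ)^{-ℓ}`, so the series is a
probability generating function evaluated at `s = (1 + βφ)⁻¹` and sums to
`(exp (μ s) - 1) / (exp μ - 1)`. As `t → ∞` we have `μ → 0` and `s → 2|α| / (φ + 2|α|)`, and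
`(exp (μ s) - 1) / (exp μ - 1) → s` because `exp` has derivative `1` at `0`.
-/

theorem hasSum_pow_succ_div_factorial (y : ℝ) :
    HasSum (fun ℓ : ℕ => y ^ (ℓ + 1) / (ℓ + 1).factorial) (exp y - 1) := by
  have h := (hasSum_nat_add_iff' 1).2 (NormedSpace.expSeries_div_hasSum_exp y)
  simpa [← exp_eq_exp_ℝ] using h

theorem exp_neg_div_one_sub_exp_neg (m : ℝ) : exp (-m) / (1 - exp (-m)) = (exp m - 1)⁻¹ := by
  rw [exp_neg]
  rcases eq_or_ne (exp m) 1 with h | h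
  · simp [h]
  · field_simp

theorem hasSum_zeroTruncatedPoisson_mul_rpow_neg (m B : ℝ) :
    HasSum (fun ℓ : ℕ => exp (-m) / (1 - exp (-m)) * m ^ (ℓ + 1) / (ℓ + 1).factorial *
      B ^ (-((ℓ : ℝ) + 1))) ((exp (m * B⁻¹) - 1) / (exp m - 1)) := by
  have hterm (ℓ : ℕ) : exp (-m) / (1 - exp (-m)) * m ^ (ℓ + 1) / (ℓ + 1).factorial *
      B ^ (-((ℓ : ℝ) + 1)) = (exp m - 1)⁻¹ * ((m * B⁻¹) ^ (ℓ + 1) / (ℓ + 1).factorial) := by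
    rw [show -((ℓ : ℝ) + 1) = ((-(ℓ + 1 : ℕ) : ℤ) : ℝ) by push_cast; ring, rpow_intCast,
      zpow_neg, zpow_natCast, ← inv_pow, exp_neg_div_one_sub_exp_neg, mul_pow]
    ring
  simp only [hterm, div_eq_inv_mul (exp (m * B⁻¹) - 1)]
  exact (hasSum_pow_succ_div_factorial (m * B⁻¹)).mul_left _

theorem tendsto_exp_mul_sub_one_div_exp_sub_one {ι : Type*} {l : Filter ι} {m x : ι → ℝ} {c : ℝ}
    (hm : Tendsto m l (𝓝 0)) (hm_ne : ∀ᶠ i in l, m i ≠ 0) (hx : Tendsto x l (𝓝 c)) :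
    Tendsto (fun i => (exp (m i * x i) - 1) / (exp (m i) - 1)) l (𝓝 c) := by
  -- `exp y - 1 = y * d y` with `d` continuous and `d 0 = 1`; no case split on `x i = 0` is needed.
  set d := dslope exp 0
  have hd : ContinuousAt d 0 := continuousAt_dslope_same.2 differentiableAt_exp
  have hd0 : d 0 = 1 := by simp [d, dslope_same]
  have hsub (y : ℝ) : exp y - 1 = y * d y := by
    simpa [d] using (sub_smul_dslope exp 0 y).symm
  have hmx : Tendsto (fun i => m i * x i) l (𝓝 0) := by simpa using hm.mul hx
  have hlim := (hx.mul (hd.tendsto.comp hmx)).div (hd.tendsto.comp hm) (by simp [hd0])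
  rw [hd0, mul_one, div_one] at hlim
  refine hlim.congr' ?_
  filter_upwards [hm_ne] with i hi
  simp only [Pi.div_apply, Function.comp_apply, hsub, mul_assoc, mul_div_mul_left _ _ hi]

/-- Quasi-stationary limit of the subcritical (`α < 0`) Feller diffusion conditioned on
non-extinction: the Laplace transform `ζ(φ,t)` converges to `2|α|/(φ + 2|α|)` as `t → ∞`. -/
theorem subcritical_quasistationary_limit (α : ℝ) (hα : α < 0) (μ β : ℝ → ℝ)
    (hμ : ∀ t : ℝ, μ t = 2 * α * Real.exp (α * t) / (Real.exp (α * t) - 1))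
    (hβ : ∀ t : ℝ, β t = (Real.exp (α * t) - 1) / (2 * α))
    (ζ : ℝ → ℝ → ℝ)
    (hζ : ∀ φ t : ℝ, ζ φ t =
      ∑' ℓ : ℕ, Real.exp (-(μ t)) / (1 - Real.exp (-(μ t))) *
        (μ t) ^ (ℓ + 1) / (Nat.factorial (ℓ + 1)) * (1 + β t * φ) ^ (-((ℓ : ℝ) + 1))) :
    ∀ φ : ℝ, 0 ≤ φ →
      Tendsto (fun t => ζ φ t) atTop (𝓝 (2 * |α| / (φ + 2 * |α|))) := by
  intro φ hφ
  have hexp : Tendsto (fun t => exp (α * t)) atTop (𝓝 0) :=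
    tendsto_exp_atBot.comp (tendsto_id.const_mul_atTop_of_neg hα)
  have hμ_lim : Tendsto μ atTop (𝓝 0) := by
    have h := (hexp.const_mul (2 * α)).div (hexp.sub_const 1) (by norm_num)
    rw [mul_zero, zero_div] at h
    exact h.congr fun t => (hμ t).symm
  have hμ_ne : ∀ᶠ t in atTop, μ t ≠ 0 := by
    filter_upwards [eventually_gt_atTop 0] with t ht
    have hexp_lt : exp (α * t) < 1 := exp_lt_one_iff.2 (mul_neg_of_neg_of_pos hα ht)
    rw [hμ]
    exact div_ne_zero (mul_ne_zero (mul_ne_zero two_ne_zero hα.ne) (exp_pos _).ne') (by linarith)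
  have hB_lim : Tendsto (fun t => 1 + β t * φ) atTop (𝓝 ((φ + 2 * |α|) / (2 * |α|))) := by
    have h := ((hexp.sub_const 1).div_const (2 * α)).mul_const φ |>.const_add 1
    convert h using 2 with t
    · rw [hβ]
    · rw [abs_of_neg hα]
      field_simp [hα.ne]
      ring
  have hζ_eq : (fun t => ζ φ t) =
      fun t => (exp (μ t * (1 + β t * φ)⁻¹) - 1) / (exp (μ t) - 1) :=
    funext fun t => (hζ φ t).trans (hasSum_zeroTruncatedPoisson_mul_rpow_neg _ _).tsum_eq
  rw [hζ_eq, ← inv_div]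
  exact tendsto_exp_mul_sub_one_div_exp_sub_one hμ_lim hμ_ne
    (hB_lim.inv₀ (by have := abs_pos.2 hα.ne; positivity))
end

section
/- Let γ be a reversible d×d rate matrix with stationary distribution π (π_iγ_{ij} = π_jγ_{ji}), with right eigenvectors u^{(ℓ)} and eigenvalues ν_ℓ (ℓ = 0,…,d−1, ν_0 = 0, u^{(0)} = 1) normalized by Σ_i π_i u_i^{(k)} u_i^{(ℓ)} = δ_{kℓ}. Set μ_i = π_i/(2|α|). Then μ_{ij} = (π_iπ_j/(2α²)) (1 + Σ_{ℓ=1}^{d−1} (|α|/(|α| − 2ν_ℓ)) u_i^{(ℓ)} u_j^{(ℓ)}) solves the system δ_{rs}μ_r − |α|μ_{rs} + Σ_i(γ_{ir}μ_{is} + γ_{is}μ_{ir}) = 0 for all r,s, assuming ν_ℓ < 0 for ℓ ≥ 1 and α < 0. -/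
/-!
Write `K c = ∑ ℓ, c ℓ • u⁽ˡ⁾ u⁽ˡ⁾ᵀ` and `D = diagonal p`. Then `γ = K ν * D` and, the constant `1`
being the `ℓ = 0` term (`u⁽⁰⁾ = 1`, `ν 0 = 0`), `μ₂ = D * K w * D / (2α²)` with
`w ℓ = |α| / (|α| - 2 ν ℓ)`. Orthonormality of the `u⁽ˡ⁾` in `L²(p)` gives
`K a * D * K b = K (a * b)`, so the drift terms `γᵀ μ₂ + μ₂ᵀ γ` equal `D * K (2 ν w) * D / (2α²)`.
As `2 ν w = |α| (w - 1)` and completeness gives `D * K 1 = 1`, they equal `|α| μ₂ - D / (2|α|)`,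
which cancels the other two terms.
-/

open Matrix

theorem mul_diagonal_mul_transpose_apply {m n R : Type*} [Fintype n] [DecidableEq n] [CommRing R]
    (u : Matrix m n R) (p : n → R) (k l : m) :
    (u * diagonal p * uᵀ) k l = ∑ i, p i * u k i * u l i := by
  rw [mul_apply]
  exact Finset.sum_congr rfl fun i _ => by rw [mul_diagonal, transpose_apply]; ring

section SpectralKernel

variable {ι n R : Type*} [Fintype ι] [DecidableEq ι] [CommRing R]

def spectralKernel (u : Matrix ι n R) : (ι → R) →ₗ[R] Matrix n n R where
  toFun c := uᵀ * diagonal c * u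
  map_add' c c' := by
    rw [show diagonal (c + c') = diagonal c + diagonal c' from (diagonal_add c c').symm,
      Matrix.mul_add, Matrix.add_mul]
  map_smul' a c := by rw [diagonal_smul, Matrix.mul_smul, Matrix.smul_mul, RingHom.id_apply]

theorem spectralKernel_apply (u : Matrix ι n R) (c : ι → R) (i j : n) :
    spectralKernel u c i j = ∑ ℓ, c ℓ * u ℓ i * u ℓ j := by
  simp only [spectralKernel, LinearMap.coe_mk, AddHom.coe_mk]
  rw [mul_apply]
  simp only [mul_diagonal, transpose_apply]
  exact Finset.sum_congr rfl fun ℓ _ => by ring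

theorem spectralKernel_transpose (u : Matrix ι n R) (c : ι → R) :
    (spectralKernel u c)ᵀ = spectralKernel u c := by
  simp only [spectralKernel, LinearMap.coe_mk, AddHom.coe_mk, transpose_mul, transpose_transpose,
    diagonal_transpose, Matrix.mul_assoc]

variable [Fintype n] [DecidableEq n]

theorem spectralKernel_mul_diagonal_mul {u : Matrix ι n R} {p : n → R}
    (hu : u * diagonal p * uᵀ = 1) (a b : ι → R) :
    spectralKernel u a * diagonal p * spectralKernel u b = spectralKernel u (a * b) := by
  simp only [spectralKernel, LinearMap.coe_mk, AddHom.coe_mk]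
  calc uᵀ * diagonal a * u * diagonal p * (uᵀ * diagonal b * u)
      = uᵀ * diagonal a * (u * diagonal p * uᵀ) * (diagonal b * u) := by
        simp only [Matrix.mul_assoc]
    _ = uᵀ * diagonal (a * b) * u := by
        rw [hu, Matrix.mul_one, ← Matrix.mul_assoc, Matrix.mul_assoc uᵀ, diagonal_mul_diagonal]
        rfl

theorem diagonal_mul_spectralKernel_one {u : Matrix n n R} {p : n → R}
    (hu : u * diagonal p * uᵀ = 1) : diagonal p * spectralKernel u 1 = 1 := by
  rw [Matrix.mul_assoc] at hu
  simpa only [spectralKernel, LinearMap.coe_mk, AddHom.coe_mk, diagonal_one', Matrix.one_mul,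
    Matrix.mul_assoc] using mul_eq_one_comm.mp hu

end SpectralKernel

section SecondMoments

variable {n R : Type*} [Fintype n] [DecidableEq n]

def secondMomentResidual [CommRing R] (a : R) (γ : Matrix n n R) (m : n → R)
    (M : Matrix n n R) : Matrix n n R :=
  diagonal m - a • M + (γᵀ * M + Mᵀ * γ)

theorem secondMomentResidual_apply [CommRing R] (a : R) (γ : Matrix n n R) (m : n → R)
    (M : Matrix n n R) (r s : n) :
    secondMomentResidual a γ m M r s =
      (if r = s then m r else 0) - a * M r s + ∑ i, (γ i r * M i s + γ i s * M i r) := by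
  simp only [secondMomentResidual, Matrix.add_apply, Matrix.sub_apply, Matrix.smul_apply,
    diagonal_apply, mul_apply, transpose_apply, smul_eq_mul, Finset.sum_add_distrib]
  congr 2
  exact Finset.sum_congr rfl fun i _ => mul_comm _ _

theorem secondMomentResidual_spectralKernel_eq_zero [Field R] [NeZero (2 : R)]
    {u : Matrix n n R} {p : n → R} (hu : u * diagonal p * uᵀ = 1) {a : R} (ha : a ≠ 0)
    {ν : n → R} (hν : ∀ ℓ, a - 2 * ν ℓ ≠ 0) :
    secondMomentResidual a (spectralKernel u ν * diagonal p) ((2 * a)⁻¹ • p)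
      ((2 * a ^ 2)⁻¹ •
        (diagonal p * spectralKernel u (fun ℓ => a / (a - 2 * ν ℓ)) * diagonal p)) = 0 := by
  set w : n → R := fun ℓ => a / (a - 2 * ν ℓ)
  set K := spectralKernel u
  set D := diagonal p
  set M := (2 * a ^ 2)⁻¹ • (D * K w * D) with hM
  have hMsymm : Mᵀ = M := by
    rw [hM, transpose_smul, transpose_mul, transpose_mul, diagonal_transpose,
      spectralKernel_transpose, Matrix.mul_assoc]
  have hcoef : ν * w + w * ν = a • (w - 1) := funext fun ℓ => by
    simp only [w, Pi.add_apply, Pi.mul_apply, Pi.smul_apply, Pi.sub_apply, Pi.one_apply,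
      smul_eq_mul]
    rw [div_sub_one (hν ℓ)]
    ring
  have hcross : (K ν * D)ᵀ * M + Mᵀ * (K ν * D) = a • M - (2 * a)⁻¹ • D :=
    calc (K ν * D)ᵀ * M + Mᵀ * (K ν * D)
        = (2 * a ^ 2)⁻¹ • (D * (K ν * D * K w + K w * D * K ν) * D) := by
          rw [hMsymm]
          simp only [M, transpose_mul, diagonal_transpose, spectralKernel_transpose,
            Matrix.mul_smul, Matrix.smul_mul, Matrix.mul_add, Matrix.add_mul, Matrix.mul_assoc,
            smul_add, D, K]
      _ = (2 * a ^ 2)⁻¹ • (D * (a • (K w - K 1)) * D) := by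
          rw [spectralKernel_mul_diagonal_mul hu, spectralKernel_mul_diagonal_mul hu,
            ← map_add, hcoef, map_smul, map_sub]
      _ = a • M - (2 * a)⁻¹ • D := by
          rw [Matrix.mul_smul, Matrix.smul_mul, Matrix.mul_sub, Matrix.sub_mul,
            diagonal_mul_spectralKernel_one hu, Matrix.one_mul]
          match_scalars <;> field_simp
  rw [secondMomentResidual, hcross, diagonal_smul]
  abel

end SecondMoments

theorem subcritical_second_moments_reversible_general (d : ℕ) [NeZero d] (α : ℝ) (hα : α < 0)
    (γ : Matrix (Fin d) (Fin d) ℝ) (p : Fin d → ℝ)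
    (u : Fin d → Fin d → ℝ) (ν : Fin d → ℝ)
    (hν0 : ν 0 = 0) (hu0 : ∀ i, u 0 i = 1) (hνneg : ∀ ℓ, ℓ ≠ 0 → ν ℓ < 0)
    (hnorm : ∀ k ℓ, ∑ i, p i * u k i * u ℓ i = if k = ℓ then 1 else 0)
    (hspec : ∀ i j, γ i j = p j * ∑ ℓ, ν ℓ * u ℓ i * u ℓ j)
    (μ : Fin d → ℝ) (hμ : ∀ i, μ i = p i / (2 * |α|))
    (μ2 : Fin d → Fin d → ℝ)
    (hμ2 : ∀ i j, μ2 i j = p i * p j / (2 * α ^ 2) *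
      (1 + ∑ ℓ ∈ Finset.univ.erase 0, |α| / (|α| - 2 * ν ℓ) * u ℓ i * u ℓ j)) :
    ∀ r s, (if r = s then μ r else 0) - |α| * μ2 r s +
      ∑ i, (γ i r * μ2 i s + γ i s * μ2 i r) = 0 := by
  have hA : 0 < |α| := abs_pos.mpr hα.ne
  have hden : ∀ ℓ, |α| - 2 * ν ℓ ≠ 0 := fun ℓ => by
    rcases eq_or_ne ℓ 0 with rfl | hℓ
    · simpa [hν0] using hA.ne'
    · linarith [hνneg ℓ hℓ]
  set U : Matrix (Fin d) (Fin d) ℝ := Matrix.of u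
  have hortho : U * diagonal p * Uᵀ = 1 := by
    ext k ℓ
    rw [mul_diagonal_mul_transpose_apply, one_apply]
    exact hnorm k ℓ
  have hγ : γ = spectralKernel U ν * diagonal p := by
    ext i j
    rw [mul_diagonal, spectralKernel_apply, hspec, mul_comm]
    rfl
  have hμp : μ = (2 * |α|)⁻¹ • p := funext fun i => by
    rw [hμ, Pi.smul_apply, smul_eq_mul, div_eq_inv_mul]
  have hμ2p : Matrix.of μ2 = (2 * |α| ^ 2)⁻¹ •
      (diagonal p * spectralKernel U (fun ℓ => |α| / (|α| - 2 * ν ℓ)) * diagonal p) := by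
    ext i j
    rw [Matrix.smul_apply, mul_diagonal, diagonal_mul, spectralKernel_apply,
      ← Finset.add_sum_erase _ _ (Finset.mem_univ 0)]
    simp only [U, of_apply, hμ2, hν0, hu0, mul_zero, sub_zero, div_self hA.ne', sq_abs,
      smul_eq_mul]
    ring
  intro r s
  have h := congrFun (congrFun
    (secondMomentResidual_spectralKernel_eq_zero hortho hA.ne' hden) r) s
  rwa [← hγ, ← hμp, ← hμ2p, secondMomentResidual_apply] at h

/-- Second moments of the quasi-stationary distribution for a reversible rate matrix `γ`
with spectral data `(ν_ℓ, u^{(ℓ)})`: the matrix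
`μ_{ij} = (p_ip_j/(2α²))(1 + Σ_{ℓ≥1} (|α|/(|α|−2ν_ℓ)) u_i^{(ℓ)} u_j^{(ℓ)})` solves
`δ_{rs}μ_r − |α|μ_{rs} + Σ_i(γ_{ir}μ_{is} + γ_{is}μ_{ir}) = 0` with `μ_i = p_i/(2|α|)`. -/
theorem subcritical_second_moments_reversible (d : ℕ) [NeZero d] (α : ℝ) (hα : α < 0)
    (γ : Matrix (Fin d) (Fin d) ℝ) (p : Fin d → ℝ) (hpsum : ∑ i, p i = 1)
    (hrev : ∀ i j, p i * γ i j = p j * γ j i)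
    (u : Fin d → Fin d → ℝ) (ν : Fin d → ℝ)
    (hν0 : ν 0 = 0) (hu0 : ∀ i, u 0 i = 1) (hνneg : ∀ ℓ, ℓ ≠ 0 → ν ℓ < 0)
    (hnorm : ∀ k ℓ, ∑ i, p i * u k i * u ℓ i = if k = ℓ then 1 else 0)
    (hspec : ∀ i j, γ i j = p j * ∑ ℓ, ν ℓ * u ℓ i * u ℓ j)
    (μ : Fin d → ℝ) (hμ : ∀ i, μ i = p i / (2 * |α|))
    (μ2 : Fin d → Fin d → ℝ)
    (hμ2 : ∀ i j, μ2 i j = p i * p j / (2 * α ^ 2) *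
      (1 + ∑ ℓ ∈ Finset.univ.erase 0, |α| / (|α| - 2 * ν ℓ) * u ℓ i * u ℓ j)) :
    ∀ r s, (if r = s then μ r else 0) - |α| * μ2 r s +
      ∑ i, (γ i r * μ2 i s + γ i s * μ2 i r) = 0 :=
  subcritical_second_moments_reversible_general d α hα γ p u ν hν0 hu0 hνneg hnorm hspec μ hμ μ2 hμ2
end

section
/- For a parent-independent rate matrix γ_{ij} = (θ/2)(π_j − δ_{ij}) with probability vector π and θ > 0, the solution of δ_{rs}μ_r − |α|μ_{rs} + Σ_i(γ_{ir}μ_{is} + γ_{is}μ_{ir}) = 0 with μ_i = π_i/(2|α|) is μ_{ij} = π_i(|α|δ_{ij} + θπ_j)/(2α²(|α| + θ)). -/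
/-!
With `a = |α|`, the parent-independent generator acts on a matrix `M` by
`∑ i, γ i t * M i u = θ/2 * (p t * (column sum of M at u) - M t u)`. The candidate second moments
have column sums `p u / (2a²)` and are symmetric, so the moment equation collapses to
`δ_{rs} p_r/(2a) - (a + θ) μ_{rs} + θ p_r p_s/(2a²) = 0`, which is the defining formula of `μ_{rs}`.
-/

open Finset

section ParentIndependent

variable {ι K : Type*} [DecidableEq ι] [Field K]

def pimRate (θ : K) (p : ι → K) : Matrix ι ι K :=
  fun i j => θ / 2 * (p j - if i = j then 1 else 0)

def pimSecondMoment (a θ : K) (p : ι → K) (i j : ι) : K :=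
  p i * (a * (if i = j then 1 else 0) + θ * p j) / (2 * a ^ 2 * (a + θ))

theorem pimSecondMoment_comm (a θ : K) (p : ι → K) (i j : ι) :
    pimSecondMoment a θ p i j = pimSecondMoment a θ p j i := by
  unfold pimSecondMoment
  by_cases h : i = j
  · rw [h]
  · rw [if_neg h, if_neg (Ne.symm h)]
    ring

variable [Fintype ι]

theorem sum_pimRate_mul (θ : K) (p : ι → K) (M : ι → ι → K) (t u : ι) :
    ∑ i, pimRate θ p i t * M i u = θ / 2 * (p t * ∑ i, M i u - M t u) := by
  simp only [pimRate, mul_sub, sub_mul, mul_ite, ite_mul, mul_one, mul_zero, zero_mul,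
    sum_sub_distrib, sum_ite_eq', mem_univ, if_true, ← mul_sum]
  ring

theorem sum_pimSecondMoment {a θ : K} (haθ : a + θ ≠ 0) {p : ι → K} (hp : ∑ i, p i = 1)
    (u : ι) : ∑ i, pimSecondMoment a θ p i u = p u / (2 * a ^ 2) := by
  have hnum : ∑ i, p i * (a * (if i = u then 1 else 0) + θ * p u) = (a + θ) * p u := by
    simp only [mul_add, mul_ite, mul_one, mul_zero, sum_add_distrib, sum_ite_eq', mem_univ,
      if_true, ← sum_mul, hp]
    ring
  simp only [pimSecondMoment]
  rw [← sum_div, hnum, mul_comm (2 * a ^ 2), mul_div_mul_left _ _ haθ]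

theorem pimSecondMoment_moment_eq [CharZero K] {a θ : K} (ha : a ≠ 0) (haθ : a + θ ≠ 0)
    {p : ι → K} (hp : ∑ i, p i = 1) (r s : ι) :
    (if r = s then p r / (2 * a) else 0) - a * pimSecondMoment a θ p r s +
      ∑ i, (pimRate θ p i r * pimSecondMoment a θ p i s +
        pimRate θ p i s * pimSecondMoment a θ p i r) = 0 := by
  rw [sum_add_distrib, sum_pimRate_mul, sum_pimRate_mul, sum_pimSecondMoment haθ hp,
    sum_pimSecondMoment haθ hp, pimSecondMoment_comm a θ p s r]
  unfold pimSecondMoment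
  split_ifs with h
  · subst h
    field_simp
    ring
  · field_simp
    ring

end ParentIndependent

theorem subcritical_second_moments_PIM_general (d : ℕ) (α : ℝ) (hα : α < 0)
    (θ : ℝ) (hθ : 0 < θ) (p : Fin d → ℝ) (hpsum : ∑ i, p i = 1)
    (γ : Matrix (Fin d) (Fin d) ℝ)
    (hγ : ∀ i j, γ i j = θ / 2 * (p j - if i = j then 1 else 0))
    (μ : Fin d → ℝ) (hμ : ∀ i, μ i = p i / (2 * |α|))
    (μ2 : Fin d → Fin d → ℝ)
    (hμ2 : ∀ i j, μ2 i j =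
      p i * (|α| * (if i = j then 1 else 0) + θ * p j) / (2 * α ^ 2 * (|α| + θ))) :
    ∀ r s, (if r = s then μ r else 0) - |α| * μ2 r s +
      ∑ i, (γ i r * μ2 i s + γ i s * μ2 i r) = 0 := by
  intro r s
  have ha : 0 < |α| := abs_pos.mpr hα.ne
  obtain rfl : γ = pimRate θ p := Matrix.ext hγ
  obtain rfl : μ = fun i => p i / (2 * |α|) := funext hμ
  obtain rfl : μ2 = pimSecondMoment |α| θ p := by
    ext i j
    rw [hμ2, pimSecondMoment, sq_abs]
  simpa only [apply_ite (fun f : Fin d → ℝ => f r)] using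
    pimSecondMoment_moment_eq ha.ne' (add_pos ha hθ).ne' hpsum r s

/-- Quasi-stationary second moments for a parent-independent rate matrix
`γ_{ij} = (θ/2)(p_j − δ_{ij})`: with `μ_i = p_i/(2|α|)`, the solution of
`δ_{rs}μ_r − |α|μ_{rs} + Σ_i(γ_{ir}μ_{is} + γ_{is}μ_{ir}) = 0` is
`μ_{ij} = p_i(|α|δ_{ij} + θp_j)/(2α²(|α| + θ))`. -/
theorem subcritical_second_moments_PIM (d : ℕ) (α : ℝ) (hα : α < 0)
    (θ : ℝ) (hθ : 0 < θ) (p : Fin d → ℝ) (hp : ∀ i, 0 ≤ p i) (hpsum : ∑ i, p i = 1)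
    (γ : Matrix (Fin d) (Fin d) ℝ)
    (hγ : ∀ i j, γ i j = θ / 2 * (p j - if i = j then 1 else 0))
    (μ : Fin d → ℝ) (hμ : ∀ i, μ i = p i / (2 * |α|))
    (μ2 : Fin d → Fin d → ℝ)
    (hμ2 : ∀ i j, μ2 i j =
      p i * (|α| * (if i = j then 1 else 0) + θ * p j) / (2 * α ^ 2 * (|α| + θ))) :
    ∀ r s, (if r = s then μ r else 0) - |α| * μ2 r s +
      ∑ i, (γ i r * μ2 i s + γ i s * μ2 i r) = 0 :=
  subcritical_second_moments_PIM_general d α hα θ hθ p hpsum γ hγ μ hμ μ2 hμ2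
end

section
/- For x > 0, the convolution ∫₀^x e^{−(x−u)} E₁(u) du equals e^{−x}(e^x E₁(x) + γ + log x), where E₁ is the exponential integral and γ is the Euler–Mascheroni constant; equivalently ∫₀^x e^u E₁(u) du = e^x E₁(x) + γ + log x. -/
open Real MeasureTheory

/-- The exponential integral `E₁(x) = ∫₁^∞ e^{−xt}/t dt`. -/
noncomputable def expIntegralE1 (x : ℝ) : ℝ := ∫ t in Set.Ioi (1 : ℝ), Real.exp (-(x * t)) / t

/-!
Integration by parts gives `E₁(x) = K(x) - e^{-x} log x` for `K(x) = ∫ₓ^∞ e^{-t} log t dt`.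
Hence `G(x) = e^x K(x)` equals `e^x E₁(x) + log x` and has derivative `e^x E₁(x) ≥ 0`, while `G`
is continuous up to `0` with `G(0) = ∫₀^∞ e^{-t} log t dt = Γ'(1) = -γ`. The fundamental theorem
of calculus (the nonnegative derivative is automatically integrable) gives
`∫₀^x e^u E₁(u) du = G(x) - G(0)`.
-/

open Set Filter Topology

lemma hasDerivAt_integral_Ioi {E : Type*} [NormedAddCommGroup E] [NormedSpace ℝ E]
    [CompleteSpace E] {f : ℝ → E} {a x : ℝ} (hf : IntegrableOn f (Ioi a)) (hax : a < x)
    (hfx : ContinuousAt f x) : HasDerivAt (fun y => ∫ t in Ioi y, f t) (-f x) x := by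
  have hprimitive : HasDerivAt (fun y => ∫ t in a..y, f t) (f x) x :=
    intervalIntegral.integral_hasDerivAt_right
      ((intervalIntegrable_iff_integrableOn_Ioc_of_le hax.le).2 (hf.mono_set Ioc_subset_Ioi_self))
      ⟨Ioi a, Ioi_mem_nhds hax, hf.aestronglyMeasurable⟩ hfx
  refine (hprimitive.const_sub (∫ t in Ioi a, f t)).congr_of_eventuallyEq ?_
  filter_upwards [Ioi_mem_nhds hax] with y hy
  rw [← intervalIntegral.integral_Ioi_sub_Ioi hf hy.le, sub_sub_cancel]

lemma integrableOn_exp_neg_div_Ioi {x : ℝ} (hx : 0 < x) :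
    IntegrableOn (fun t => exp (-t) / t) (Ioi x) := by
  refine Integrable.mono' ((integrableOn_exp_neg_Ioi x).const_mul x⁻¹)
    (by fun_prop : Measurable fun t : ℝ => exp (-t) / t).aestronglyMeasurable ?_
  filter_upwards [ae_restrict_mem measurableSet_Ioi] with t (ht : x < t)
  rw [norm_of_nonneg (by have := hx.trans ht; positivity), div_eq_inv_mul]
  gcongr

lemma integrableOn_exp_neg_mul_log_Ioi : IntegrableOn (fun t => exp (-t) * log t) (Ioi 0) := by
  rw [← Ioc_union_Ioi_eq_Ioi zero_le_one]
  refine IntegrableOn.union ?_ ?_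
  · exact (intervalIntegrable_iff_integrableOn_Ioc_of_le zero_le_one).1
      (intervalIntegral.intervalIntegrable_log'.continuousOn_mul (by fun_prop))
  · refine Integrable.mono'
      ((GammaIntegral_convergent two_pos).mono_set (Ioi_subset_Ioi zero_le_one))
      (by fun_prop : Measurable fun t : ℝ => exp (-t) * log t).aestronglyMeasurable ?_
    filter_upwards [ae_restrict_mem measurableSet_Ioi] with t (ht : 1 < t)
    rw [norm_of_nonneg (mul_nonneg (exp_pos _).le (log_nonneg ht.le)),
      show (2 : ℝ) - 1 = 1 by norm_num, rpow_one]
    gcongr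
    exact log_le_self (by linarith)

lemma integral_exp_neg_mul_log_Ioi :
    ∫ t in Ioi 0, exp (-t) * log t = -eulerMascheroniConstant := by
  have hGamma : HasDerivAt Complex.GammaIntegral (-eulerMascheroniConstant : ℂ) 1 := by
    refine Complex.hasDerivAt_Gamma_one.congr_of_eventuallyEq ?_
    filter_upwards [(isOpen_lt continuous_const Complex.continuous_re).mem_nhds
      (by norm_num : (0 : ℝ) < (1 : ℂ).re)] with s hs
    exact (Complex.Gamma_eq_integral hs).symm
  have h := (Complex.hasDerivAt_GammaIntegral (s := 1) (by norm_num)).unique hGamma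
  simp only [sub_self, Complex.cpow_zero, one_mul, mul_comm (Complex.ofReal (log _))] at h
  have hcast : ((∫ t in Ioi 0, exp (-t) * log t : ℝ) : ℂ) = -eulerMascheroniConstant := by
    rw [← h, ← integral_complex_ofReal]
    simp only [Complex.ofReal_mul]
  exact_mod_cast hcast

lemma expIntegralE1_nonneg (x : ℝ) : 0 ≤ expIntegralE1 x :=
  setIntegral_nonneg measurableSet_Ioi fun t (ht : 1 < t) => by
    have := one_pos.trans ht; positivity

lemma expIntegralE1_eq_integral_Ioi {x : ℝ} (hx : 0 < x) :
    expIntegralE1 x = ∫ t in Ioi x, exp (-t) / t := by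
  have hsubst := integral_comp_mul_left_Ioi (fun s => exp (-s) / s) 1 hx
  rw [mul_one, smul_eq_mul] at hsubst
  calc expIntegralE1 x = ∫ t in Ioi 1, x * (exp (-(x * t)) / (x * t)) :=
        setIntegral_congr_fun measurableSet_Ioi fun t (ht : 1 < t) => by
          have := one_pos.trans ht; field_simp
    _ = ∫ t in Ioi x, exp (-t) / t := by
        rw [integral_const_mul, hsubst, mul_inv_cancel_left₀ hx.ne']

lemma tendsto_exp_neg_mul_log_atTop : Tendsto (fun t => exp (-t) * log t) atTop (𝓝 0) := by
  refine squeeze_zero' ?_ ?_ (by simpa using tendsto_pow_mul_exp_neg_atTop_nhds_zero 1)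
  · filter_upwards [eventually_ge_atTop 1] with t ht
    exact mul_nonneg (exp_pos _).le (log_nonneg ht)
  · filter_upwards [eventually_ge_atTop 1] with t ht
    rw [mul_comm t]
    gcongr
    exact log_le_self (by linarith)

lemma expIntegralE1_eq_integral_exp_neg_mul_log_sub {x : ℝ} (hx : 0 < x) :
    expIntegralE1 x = (∫ t in Ioi x, exp (-t) * log t) - exp (-x) * log x := by
  have hparts := integral_Ioi_mul_deriv_eq_deriv_mul (a := x) (u := fun t => exp (-t))
    (v := log) (u' := fun t => -exp (-t)) (v' := fun t => t⁻¹)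
    (fun t _ => by simpa using (hasDerivAt_neg t).exp)
    (fun t (ht : x < t) => hasDerivAt_log (hx.trans ht).ne')
    (by simpa only [Pi.mul_def, div_eq_mul_inv] using integrableOn_exp_neg_div_Ioi hx)
    (by simpa only [Pi.mul_def, Pi.neg_def, neg_mul] using
      (integrableOn_exp_neg_mul_log_Ioi.mono_set (Ioi_subset_Ioi hx.le)).neg)
    (((continuous_exp.comp continuous_neg).continuousAt.mul
      (continuousAt_log hx.ne')).tendsto.mono_left nhdsWithin_le_nhds)
    tendsto_exp_neg_mul_log_atTop
  simp only [Pi.mul_apply, Function.comp_apply, neg_mul, integral_neg, ← div_eq_mul_inv] at hparts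
  rw [expIntegralE1_eq_integral_Ioi hx, hparts]
  ring

theorem integral_exp_mul_expIntegralE1 {x : ℝ} (hx : 0 < x) :
    ∫ u in (0:ℝ)..x, exp u * expIntegralE1 u
      = exp x * expIntegralE1 x + eulerMascheroniConstant + log x := by
  set G : ℝ → ℝ := fun y => exp y * ∫ t in Ioi y, exp (-t) * log t
  have hcont : ContinuousOn G (Icc 0 x) :=
    continuous_exp.continuousOn.mul
      (integrableOn_exp_neg_mul_log_Ioi.continuousOn_Ici_primitive_Ioi.mono Icc_subset_Ici_self)
  have hderiv : ∀ u ∈ Ioo 0 x, HasDerivAt G (exp u * expIntegralE1 u) u := by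
    intro u ⟨hu, _⟩
    refine ((hasDerivAt_exp u).mul (hasDerivAt_integral_Ioi integrableOn_exp_neg_mul_log_Ioi hu
      (by fun_prop (disch := exact hu.ne')))).congr_deriv ?_
    rw [expIntegralE1_eq_integral_exp_neg_mul_log_sub hu, exp_neg]
    field_simp
    ring
  have hint : IntervalIntegrable (fun u => exp u * expIntegralE1 u) volume 0 x :=
    (intervalIntegrable_iff_integrableOn_Ioc_of_le hx.le).2 <|
      intervalIntegral.integrableOn_deriv_of_nonneg hcont hderiv
        fun u _ => mul_nonneg (exp_pos u).le (expIntegralE1_nonneg u)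
  rw [intervalIntegral.integral_eq_sub_of_hasDerivAt_of_le hx.le hcont hderiv hint,
    expIntegralE1_eq_integral_exp_neg_mul_log_sub hx]
  simp only [G, exp_zero, one_mul, integral_exp_neg_mul_log_Ioi]
  rw [mul_sub, ← mul_assoc, ← exp_add, add_neg_cancel, exp_zero, one_mul]
  ring

/-- For `x > 0`, `∫₀^x e^{−(x−u)}E₁(u) du = e^{−x}(e^xE₁(x) + γ + log x)`, equivalently
`∫₀^x e^uE₁(u) du = e^xE₁(x) + γ + log x`, where `γ` is the Euler–Mascheroni constant. -/
theorem convolution_exp_E1 (x : ℝ) (hx : 0 < x) :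
    (∫ u in (0:ℝ)..x, Real.exp (-(x - u)) * expIntegralE1 u)
      = Real.exp (-x) * (Real.exp x * expIntegralE1 x +
          Real.eulerMascheroniConstant + Real.log x) ∧
    (∫ u in (0:ℝ)..x, Real.exp u * expIntegralE1 u)
      = Real.exp x * expIntegralE1 x + Real.eulerMascheroniConstant + Real.log x := by
  refine ⟨?_, integral_exp_mul_expIntegralE1 hx⟩
  have hfactor : ∀ u, exp (-(x - u)) * expIntegralE1 u
      = exp (-x) * (exp u * expIntegralE1 u) := by
    intro u
    rw [← mul_assoc, ← exp_add]
    ring_nf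
  simp_rw [hfactor, intervalIntegral.integral_const_mul, integral_exp_mul_expIntegralE1 hx]
end

section
/- For u ∈ (0,1): ∫₀^∞ 2x e^{−(1−u)x} E₁(ux) dx = −2/(1−u) − 2 log u/(1−u)², and ∫₀^∞ ((1−u)/u) x e^{−(1−u)x} E₂(ux) dx = 1/u + 2/(1−u) + 2 log u/(1−u)²; consequently their sum equals 1/u. Hence for integers n_r ≥ 1, n_s ≥ 1, ∫₀^1 u^{n_r}(1−u)^{n_s} (1/u) du = B(n_r, n_s+1) = (n_r−1)! n_s!/(n_r+n_s)!. -/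
open Real MeasureTheory

/-- The second exponential integral `E₂(x) = ∫₁^∞ e^{−xt}/t² dt`. -/
noncomputable def expIntegralE2 (x : ℝ) : ℝ :=
  ∫ t in Set.Ioi (1 : ℝ), Real.exp (-(x * t)) / t ^ 2

/-! Writing `E_k(ux) = ∫₁^∞ e^{-uxt} t^{-k} dt` and integrating in `x` first (the integrand
is nonnegative, so Fubini applies) turns both integrals into the rational integrals
`∫₁^∞ dt / (t^k ((1-u) + ut)²)`, `k = 1, 2`, which are elementary; since `(1-u) + u = 1`, only
`log u` survives from the logarithmic terms. The Beta integral is `Γ(m+1) Γ(n+1) / Γ(m+n+2)`. -/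

open Set Filter Topology Nat

noncomputable def expIntegralE (k : ℕ) (y : ℝ) : ℝ :=
  ∫ t in Ioi (1 : ℝ), exp (-(y * t)) / t ^ k

lemma expIntegralE1_eq (y : ℝ) : expIntegralE1 y = expIntegralE 1 y := by
  simp only [expIntegralE1, expIntegralE, pow_one]

lemma expIntegralE2_eq (y : ℝ) : expIntegralE2 y = expIntegralE 2 y := rfl

lemma integral_mul_exp_neg_mul_Ioi {c : ℝ} (hc : 0 < c) :
    ∫ x in Ioi (0 : ℝ), x * exp (-(c * x)) = 1 / c ^ 2 := by
  have h := integral_rpow_mul_exp_neg_mul_Ioi two_pos hc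
  norm_num [Real.Gamma_two] at h
  rw [h]
  field_simp

lemma integrableOn_mul_exp_neg_mul_Ioi {c : ℝ} (hc : 0 < c) :
    IntegrableOn (fun x => x * exp (-(c * x))) (Ioi 0) :=
  Integrable.of_integral_ne_zero <| by
    rw [integral_mul_exp_neg_mul_Ioi hc]; positivity

lemma integrableOn_one_div_pow_mul_sq_Ioi {a u : ℝ} (ha : 0 < a) (hu : 0 < u) (k : ℕ) :
    IntegrableOn (fun t => 1 / (t ^ k * (a + u * t) ^ 2)) (Ioi 1) := by
  refine ((integrableOn_Ioi_rpow_of_lt (a := -2) (by norm_num) one_pos).const_mul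
    (u ^ 2)⁻¹).mono' ?_ ?_
  · refine ContinuousOn.aestronglyMeasurable (fun t ht => ?_) measurableSet_Ioi
    have : 0 < t := lt_trans one_pos ht
    exact (continuousAt_const.div (by fun_prop) (by positivity)).continuousWithinAt
  · filter_upwards [ae_restrict_mem measurableSet_Ioi] with t ht
    have ht0 : 0 < t := lt_trans one_pos ht
    rw [Real.norm_of_nonneg (by positivity), rpow_neg ht0.le, rpow_two, ← mul_inv, ← mul_pow,
      one_div]
    gcongr
    calc (u * t) ^ 2 ≤ 1 * (a + u * t) ^ 2 := by rw [one_mul]; gcongr; linarith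
      _ ≤ t ^ k * (a + u * t) ^ 2 := by gcongr; exact one_le_pow₀ (mem_Ioi.1 ht).le

theorem integral_mul_exp_neg_mul_expIntegralE {a u : ℝ} (ha : 0 < a) (hu : 0 < u) (k : ℕ) :
    ∫ x in Ioi 0, x * exp (-(a * x)) * expIntegralE k (u * x)
      = ∫ t in Ioi 1, 1 / (t ^ k * (a + u * t) ^ 2) := by
  set f : ℝ → ℝ → ℝ := fun x t => x * exp (-(a * x)) * (exp (-(u * x * t)) / t ^ k)
  have hf : ∀ x t, f x t = (t ^ k)⁻¹ * (x * exp (-((a + u * t) * x))) := fun x t => by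
    rw [show -((a + u * t) * x) = -(a * x) + -(u * x * t) by ring, exp_add]
    ring
  have hinner : ∀ t ∈ Ioi (1 : ℝ), ∫ x in Ioi 0, f x t = 1 / (t ^ k * (a + u * t) ^ 2) :=
    fun t ht => by
      have : 0 < a + u * t := by have : (0 : ℝ) < t := lt_trans one_pos ht; positivity
      simp_rw [hf, integral_const_mul, integral_mul_exp_neg_mul_Ioi this]
      field_simp
  have hmeas : AEStronglyMeasurable (Function.uncurry f)
      ((volume.restrict (Ioi 0)).prod (volume.restrict (Ioi 1))) := by
    unfold f; fun_prop
  have hint : Integrable (Function.uncurry f)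
      ((volume.restrict (Ioi 0)).prod (volume.restrict (Ioi 1))) := by
    refine (integrable_prod_iff' hmeas).2 ⟨?_, ?_⟩
    · filter_upwards [ae_restrict_mem measurableSet_Ioi] with t ht
      have : 0 < a + u * t := by have : (0 : ℝ) < t := lt_trans one_pos ht; positivity
      simpa only [Function.uncurry_apply_pair, hf] using
        (integrableOn_mul_exp_neg_mul_Ioi this).const_mul (t ^ k)⁻¹
    · refine (integrableOn_one_div_pow_mul_sq_Ioi ha hu k).congr_fun (fun t ht => ?_)
        measurableSet_Ioi
      dsimp only
      rw [← hinner t ht]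
      refine setIntegral_congr_fun measurableSet_Ioi (fun x hx => ?_)
      have : (0 : ℝ) < t := lt_trans one_pos ht
      have : (0 : ℝ) < x := hx
      exact (Real.norm_of_nonneg (by unfold f; positivity)).symm
  calc ∫ x in Ioi 0, x * exp (-(a * x)) * expIntegralE k (u * x)
      = ∫ x in Ioi 0, ∫ t in Ioi 1, f x t := by
        simp only [f, expIntegralE, integral_const_mul]
    _ = ∫ t in Ioi 1, ∫ x in Ioi 0, f x t := integral_integral_swap hint
    _ = ∫ t in Ioi 1, 1 / (t ^ k * (a + u * t) ^ 2) :=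
        setIntegral_congr_fun measurableSet_Ioi hinner

lemma hasDerivAt_log_div_add {a u t : ℝ} (ha : 0 ≤ a) (hu : 0 < u) (ht : 0 < t) :
    HasDerivAt (fun t => log (a / t + u)) (-a / (t * (a + u * t))) t := by
  have h := (((hasDerivAt_inv ht.ne').const_mul a).add_const u).log (by positivity)
  simp only [← div_eq_mul_inv] at h
  convert h using 1
  field_simp

lemma tendsto_log_div_add_atTop (a : ℝ) {u : ℝ} (hu : 0 < u) :
    Tendsto (fun t => log (a / t + u)) atTop (𝓝 (log u)) := by
  have h : Tendsto (fun t : ℝ => a / t + u) atTop (𝓝 u) := by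
    simpa using (tendsto_const_nhds.div_atTop tendsto_id).add_const u
  exact ((continuousAt_log hu.ne').tendsto).comp h

lemma tendsto_inv_add_mul_atTop (a : ℝ) {u : ℝ} (hu : 0 < u) :
    Tendsto (fun t => (a + u * t)⁻¹) atTop (𝓝 0) :=
  (tendsto_atTop_add_const_left _ a (tendsto_id.const_mul_atTop hu)).inv_tendsto_atTop

lemma hasDerivAt_inv_add_mul {a u t : ℝ} (h : a + u * t ≠ 0) :
    HasDerivAt (fun t => (a + u * t)⁻¹) (-u / (a + u * t) ^ 2) t := by
  refine ((((hasDerivAt_id t).const_mul u).const_add a).inv h).congr_deriv ?_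
  simp

theorem integral_one_div_mul_sq_Ioi_one {a u : ℝ} (ha : 0 < a) (hu : 0 < u) :
    ∫ t in Ioi 1, 1 / (t * (a + u * t) ^ 2)
      = (log (a + u) - log u) / a ^ 2 - 1 / (a * (a + u)) := by
  have hderiv : ∀ t ∈ Ici (1 : ℝ),
      HasDerivAt (fun t => (a + u * t)⁻¹ / a - log (a / t + u) / a ^ 2)
        (1 / (t * (a + u * t) ^ 2)) t := fun t ht => by
    have ht0 : 0 < t := lt_of_lt_of_le one_pos ht
    have : 0 < a + u * t := by positivity
    refine (((hasDerivAt_inv_add_mul this.ne').div_const a).sub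
      ((hasDerivAt_log_div_add ha.le hu ht0).div_const (a ^ 2))).congr_deriv ?_
    field_simp
    ring
  have hlim := ((tendsto_inv_add_mul_atTop a hu).div_const a).sub
    ((tendsto_log_div_add_atTop a hu).div_const (a ^ 2))
  rw [integral_Ioi_of_hasDerivAt_of_nonneg' hderiv
    (fun t ht => by have : (0 : ℝ) < t := lt_trans one_pos ht; positivity) hlim]
  field_simp
  ring

theorem integral_one_div_sq_mul_sq_Ioi_one {a u : ℝ} (ha : 0 < a) (hu : 0 < u) :
    ∫ t in Ioi 1, 1 / (t ^ 2 * (a + u * t) ^ 2)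
      = (a + 2 * u) / (a ^ 2 * (a + u)) - 2 * u * (log (a + u) - log u) / a ^ 3 := by
  have hderiv : ∀ t ∈ Ici (1 : ℝ), HasDerivAt
      (fun t => 2 * u * log (a / t + u) / a ^ 3 - (t⁻¹ + u * (a + u * t)⁻¹) / a ^ 2)
      (1 / (t ^ 2 * (a + u * t) ^ 2)) t := fun t ht => by
    have ht0 : 0 < t := lt_of_lt_of_le one_pos ht
    have : 0 < a + u * t := by positivity
    refine ((((hasDerivAt_log_div_add ha.le hu ht0).const_mul (2 * u)).div_const (a ^ 3)).sub
      (((hasDerivAt_inv ht0.ne').add ((hasDerivAt_inv_add_mul this.ne').const_mul u)).div_const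
        (a ^ 2))).congr_deriv ?_
    field_simp
    ring
  have hlim := (((tendsto_log_div_add_atTop a hu).const_mul (2 * u)).div_const (a ^ 3)).sub
    ((tendsto_inv_atTop_zero.add ((tendsto_inv_add_mul_atTop a hu).const_mul u)).div_const
      (a ^ 2))
  rw [integral_Ioi_of_hasDerivAt_of_nonneg' hderiv
    (fun t ht => by have : (0 : ℝ) < t := lt_trans one_pos ht; positivity) hlim]
  field_simp
  ring

theorem integral_pow_mul_one_sub_pow (m n : ℕ) :
    ∫ x in (0 : ℝ)..1, x ^ m * (1 - x) ^ n = (m ! * n ! / (m + n + 1)! : ℝ) := by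
  have h := Complex.betaIntegral_eq_Gamma_mul_div (m + 1) (n + 1)
    (by simp only [Complex.add_re, Complex.natCast_re, Complex.one_re]; positivity)
    (by simp only [Complex.add_re, Complex.natCast_re, Complex.one_re]; positivity)
  rw [show (m + 1 : ℂ) + (n + 1) = ((m + n + 1 : ℕ) : ℂ) + 1 by push_cast; ring,
    Complex.Gamma_nat_eq_factorial, Complex.Gamma_nat_eq_factorial,
    Complex.Gamma_nat_eq_factorial, Complex.betaIntegral] at h
  simp only [add_sub_cancel_right] at h
  apply Complex.ofReal_injective
  rw [← intervalIntegral.integral_ofReal]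
  push_cast
  rw [← h]
  exact intervalIntegral.integral_congr fun x _ => by norm_cast

theorem integral_pow_succ_mul_one_sub_pow_mul_one_div (m n : ℕ) :
    ∫ x in (0 : ℝ)..1, x ^ (m + 1) * (1 - x) ^ n * (1 / x)
      = (m ! * n ! / (m + n + 1)! : ℝ) := by
  rw [← integral_pow_mul_one_sub_pow]
  refine intervalIntegral.integral_congr_ae (Eventually.of_forall fun x hx => ?_)
  rw [uIoc_of_le zero_le_one] at hx
  have : x ≠ 0 := hx.1.ne'
  field_simp
  ring

/-- The integrals `I₁(u) = ∫₀^∞ 2xe^{−(1−u)x}E₁(ux) dx = −2/(1−u) − 2log u/(1−u)²` and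
`I₂(u) = ∫₀^∞ ((1−u)/u) xe^{−(1−u)x}E₂(ux) dx = 1/u + 2/(1−u) + 2log u/(1−u)²`, so that
`I₁(u) + I₂(u) = 1/u`; and for integers `n_r, n_s ≥ 1`,
`∫₀^1 u^{n_r}(1−u)^{n_s}(1/u) du = B(n_r, n_s+1) = (n_r−1)! n_s!/(n_r+n_s)!`. -/
theorem mixed_moment_integrals (u : ℝ) (hu0 : 0 < u) (hu1 : u < 1) :
    (∫ x in Set.Ioi (0 : ℝ), 2 * x * Real.exp (-((1 - u) * x)) * expIntegralE1 (u * x))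
      = -2 / (1 - u) - 2 * Real.log u / (1 - u) ^ 2 ∧
    (∫ x in Set.Ioi (0 : ℝ),
        (1 - u) / u * x * Real.exp (-((1 - u) * x)) * expIntegralE2 (u * x))
      = 1 / u + 2 / (1 - u) + 2 * Real.log u / (1 - u) ^ 2 ∧
    (∫ x in Set.Ioi (0 : ℝ), 2 * x * Real.exp (-((1 - u) * x)) * expIntegralE1 (u * x))
      + (∫ x in Set.Ioi (0 : ℝ),
          (1 - u) / u * x * Real.exp (-((1 - u) * x)) * expIntegralE2 (u * x))
      = 1 / u ∧
    (∀ nr ns : ℕ, 1 ≤ nr → 1 ≤ ns →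
      (∫ v in (0:ℝ)..1, v ^ nr * (1 - v) ^ ns * (1 / v))
        = (Nat.factorial (nr - 1) : ℝ) * (Nat.factorial ns) /
            (Nat.factorial (nr + ns))) := by
  have ha : 0 < 1 - u := by linarith
  have hweighted (c : ℝ) (k : ℕ) :
      ∫ x in Ioi 0, c * x * exp (-((1 - u) * x)) * expIntegralE k (u * x)
        = c * ∫ t in Ioi 1, 1 / (t ^ k * (1 - u + u * t) ^ 2) := by
    rw [← integral_mul_exp_neg_mul_expIntegralE ha hu0, ← integral_const_mul]
    simp only [mul_assoc]
  have h1 : ∫ x in Ioi 0, 2 * x * exp (-((1 - u) * x)) * expIntegralE1 (u * x)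
      = -2 / (1 - u) - 2 * log u / (1 - u) ^ 2 := by
    simp only [expIntegralE1_eq, hweighted, pow_one, integral_one_div_mul_sq_Ioi_one ha hu0,
      sub_add_cancel, log_one]
    field_simp
    ring
  have h2 : ∫ x in Ioi 0, (1 - u) / u * x * exp (-((1 - u) * x)) * expIntegralE2 (u * x)
      = 1 / u + 2 / (1 - u) + 2 * log u / (1 - u) ^ 2 := by
    simp only [expIntegralE2_eq, hweighted, integral_one_div_sq_mul_sq_Ioi_one ha hu0,
      sub_add_cancel, log_one]
    field_simp
    ring
  refine ⟨h1, h2, by rw [h1, h2]; field_simp; ring, fun nr ns hr _ => ?_⟩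
  obtain ⟨m, rfl⟩ : ∃ m, nr = m + 1 := ⟨nr - 1, by omega⟩
  rw [integral_pow_succ_mul_one_sub_pow_mul_one_div, Nat.add_sub_cancel, add_right_comm]
end
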